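/- Let β > 0 and γ > 1/2, and let ψ(k) := cos(√β k)^γ on I = (−π/(2√β), π/(2√β)). Then ∫_I |ψ'(k)|² dk = (β γ²/(2γ−1)) · ∫_I ψ(k)² dk. Consequently, for the normalized state ψ_γ = κ(γ)^{−1/2} ψ with κ(γ) = ∫_I ψ², the position variance ∫_I |ψ_γ'(k)|² dk equals β γ²/(2γ−1). -/

import Mathlib

/-!
After the substitution `x = √β k` both integrals live on `(-π/2, π/2)`, where
`ψ'² = β γ² (cos x ^ (2γ - 2) - cos x ^ (2γ))`. Differentiating `sin x * cos x ^ (2γ - 1)`, which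
vanishes at `±π/2`, gives the reduction formula `2γ ∫ cos ^ (2γ) = (2γ - 1) ∫ cos ^ (2γ - 2)` for
real exponents, and hence `∫ ψ'² = β γ² / (2γ - 1) ∫ ψ²`. The exponent `2γ - 2 > -1` is integrable
near `±π/2` by Jordan's inequality `2x/π ≤ sin x`.
-/

open MeasureTheory Set Real intervalIntegral

lemma intervalIntegrable_sin_rpow {p : ℝ} (hp : -1 < p) :
    IntervalIntegrable (fun x => sin x ^ p) volume 0 (π / 2) := by
  have hbound : IntervalIntegrable (fun x => (2 / π) ^ p * x ^ p + 1) volume 0 (π / 2) :=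
    ((intervalIntegrable_rpow' hp).const_mul _).add intervalIntegrable_const
  refine hbound.mono_fun' (continuous_sin.measurable.pow_const p).aestronglyMeasurable ?_
  rw [uIoc_of_le pi_div_two_pos.le, Filter.EventuallyLE, ae_restrict_iff' measurableSet_Ioc]
  refine .of_forall fun x ⟨hx₀, hx⟩ => ?_
  have hsin : 2 / π * x ≤ sin x := mul_le_sin hx₀.le hx
  have hx' : 0 < 2 / π * x := by positivity
  rw [norm_of_nonneg (rpow_nonneg (hx'.le.trans hsin) p), ← mul_rpow (by positivity) hx₀.le]
  rcases le_or_gt 0 p with hp₀ | hp₀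
  · linarith [rpow_le_one (hx'.le.trans hsin) (sin_le_one x) hp₀, rpow_nonneg hx'.le p]
  · linarith [rpow_le_rpow_of_nonpos hx' hsin hp₀.le]

lemma intervalIntegrable_cos_rpow {p : ℝ} (hp : -1 < p) :
    IntervalIntegrable (fun x => cos x ^ p) volume (-(π / 2)) (π / 2) := by
  have hleft := (intervalIntegrable_sin_rpow hp).comp_add_right (π / 2)
  have hright := ((intervalIntegrable_sin_rpow hp).comp_sub_left (π / 2)).symm
  simp only [sin_add_pi_div_two, sin_pi_div_two_sub, zero_sub, sub_self, sub_zero] at hleft hright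
  exact hleft.trans hright

lemma integral_cos_rpow_pos {p : ℝ} (hp : -1 < p) : 0 < ∫ x in -(π / 2)..π / 2, cos x ^ p :=
  intervalIntegral_pos_of_pos_on (intervalIntegrable_cos_rpow hp)
    (fun _ hx => rpow_pos_of_pos (cos_pos_of_mem_Ioo hx) p) (by linarith [pi_pos])

lemma rpow_eq_rpow_sub_two_mul_sq {x : ℝ} (hx : 0 < x) (p : ℝ) : x ^ p = x ^ (p - 2) * x ^ 2 := by
  rw [← rpow_natCast, ← rpow_add hx]
  norm_num

lemma sin_sq_mul_cos_rpow_sub_two {x : ℝ} (hx : 0 < cos x) (p : ℝ) :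
    sin x ^ 2 * cos x ^ (p - 2) = cos x ^ (p - 2) - cos x ^ p := by
  rw [rpow_eq_rpow_sub_two_mul_sq hx p, sin_sq]
  ring

theorem integral_cos_rpow_reduction {p : ℝ} (hp : 1 < p) :
    p * ∫ x in -(π / 2)..π / 2, cos x ^ p = (p - 1) * ∫ x in -(π / 2)..π / 2, cos x ^ (p - 2) := by
  set G : ℝ → ℝ := fun x => sin x * cos x ^ (p - 1)
  have hcont : ContinuousOn G (Icc (-(π / 2)) (π / 2)) :=
    (continuous_sin.mul (continuous_cos.rpow_const fun _ => Or.inr (by linarith))).continuousOn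
  have hderiv : ∀ x ∈ Ioo (-(π / 2)) (π / 2),
      HasDerivAt G (p * cos x ^ p - (p - 1) * cos x ^ (p - 2)) x := by
    intro x hx
    have hcos := cos_pos_of_mem_Ioo hx
    refine ((hasDerivAt_sin x).mul
      ((hasDerivAt_cos x).rpow_const (p := p - 1) (Or.inl hcos.ne'))).congr_deriv ?_
    have hpred : cos x ^ (p - 1) = cos x ^ (p - 2) * cos x := by
      rw [← rpow_add_one hcos.ne']
      ring_nf
    rw [show p - 1 - 1 = p - 2 by ring, hpred]
    linear_combination
      (1 - p) * sin_sq_mul_cos_rpow_sub_two hcos p - rpow_eq_rpow_sub_two_mul_sq hcos p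
  have hint : IntervalIntegrable (fun x => p * cos x ^ p - (p - 1) * cos x ^ (p - 2)) volume
      (-(π / 2)) (π / 2) :=
    ((intervalIntegrable_cos_rpow (by linarith)).const_mul p).sub
      ((intervalIntegrable_cos_rpow (by linarith)).const_mul (p - 1))
  have hftc := integral_eq_sub_of_hasDerivAt_of_le (by linarith [pi_pos]) hcont hderiv hint
  have hG : ∀ x, cos x = 0 → G x = 0 := fun x hx => by
    simp only [G, hx, zero_rpow (show p - 1 ≠ 0 by linarith), mul_zero]
  rw [hG _ cos_pi_div_two, hG _ (by rw [cos_neg, cos_pi_div_two]), sub_zero,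
    integral_sub ((intervalIntegrable_cos_rpow (by linarith)).const_mul p)
      ((intervalIntegrable_cos_rpow (by linarith)).const_mul (p - 1)),
    intervalIntegral.integral_const_mul, intervalIntegral.integral_const_mul] at hftc
  linarith

lemma integral_Ioo_comp_mul {s : ℝ} (hs : 0 < s) (g : ℝ → ℝ) :
    ∫ k in Ioo (-(π / (2 * s))) (π / (2 * s)), g (s * k) = s⁻¹ * ∫ x in -(π / 2)..π / 2, g x := by
  have hsa : s * (π / (2 * s)) = π / 2 := by field_simp
  rw [← integral_Ioc_eq_integral_Ioo, ← integral_of_le (by simp; positivity),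
    integral_comp_mul_left _ hs.ne', mul_neg, hsa, smul_eq_mul]

lemma cos_mul_pos_of_mem_Ioo {s k : ℝ} (hs : 0 < s)
    (hk : k ∈ Ioo (-(π / (2 * s))) (π / (2 * s))) : 0 < cos (s * k) := by
  apply cos_pos_of_mem_Ioo
  have hsa : s * (π / (2 * s)) = π / 2 := by field_simp
  constructor <;> nlinarith [hk.1, hk.2]

lemma sq_deriv_cos_mul_rpow {s γ k : ℝ} (hk : 0 < cos (s * k)) :
    deriv (fun k => cos (s * k) ^ γ) k ^ 2
      = s ^ 2 * γ ^ 2 * (cos (s * k) ^ (2 * γ - 2) - cos (s * k) ^ (2 * γ)) := by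
  have hderiv : deriv (fun k => cos (s * k) ^ γ) k
      = -sin (s * k) * s * γ * cos (s * k) ^ (γ - 1) :=
    (((hasDerivAt_cos _).comp k (hasDerivAt_const_mul s)).rpow_const (Or.inl hk.ne')).deriv
  have hsq : (cos (s * k) ^ (γ - 1)) ^ 2 = cos (s * k) ^ (2 * γ - 2) := by
    rw [← rpow_mul_natCast hk.le]
    ring_nf
  rw [hderiv, ← sin_sq_mul_cos_rpow_sub_two hk, ← hsq]
  ring

lemma integral_cos_mul_rpow_sq {s : ℝ} (hs : 0 < s) (γ : ℝ) :
    ∫ k in Ioo (-(π / (2 * s))) (π / (2 * s)), (cos (s * k) ^ γ) ^ 2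
      = s⁻¹ * ∫ x in -(π / 2)..π / 2, cos x ^ (2 * γ) := by
  rw [← integral_Ioo_comp_mul hs]
  refine setIntegral_congr_fun measurableSet_Ioo fun k hk => ?_
  rw [← rpow_mul_natCast (cos_mul_pos_of_mem_Ioo hs hk).le]
  ring_nf

lemma integral_sq_deriv_cos_mul_rpow {s : ℝ} (hs : 0 < s) (γ : ℝ) :
    ∫ k in Ioo (-(π / (2 * s))) (π / (2 * s)), deriv (fun k => cos (s * k) ^ γ) k ^ 2
      = s⁻¹ * ∫ x in -(π / 2)..π / 2, s ^ 2 * γ ^ 2 * (cos x ^ (2 * γ - 2) - cos x ^ (2 * γ)) := by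
  rw [← integral_Ioo_comp_mul hs]
  exact setIntegral_congr_fun measurableSet_Ioo fun k hk =>
    sq_deriv_cos_mul_rpow (cos_mul_pos_of_mem_Ioo hs hk)

theorem integral_sq_deriv_cos_mul_rpow_eq_mul_integral_sq {s γ : ℝ} (hs : 0 < s)
    (hγ : 1 / 2 < γ) :
    ∫ k in Ioo (-(π / (2 * s))) (π / (2 * s)), deriv (fun k => cos (s * k) ^ γ) k ^ 2
      = s ^ 2 * γ ^ 2 / (2 * γ - 1)
          * ∫ k in Ioo (-(π / (2 * s))) (π / (2 * s)), (cos (s * k) ^ γ) ^ 2 := by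
  have hreduction := integral_cos_rpow_reduction (p := 2 * γ) (by linarith)
  rw [integral_sq_deriv_cos_mul_rpow hs, integral_cos_mul_rpow_sq hs,
    intervalIntegral.integral_const_mul, integral_sub (intervalIntegrable_cos_rpow (by linarith))
      (intervalIntegrable_cos_rpow (by linarith))]
  generalize ∫ x in -(π / 2)..π / 2, cos x ^ (2 * γ) = A at hreduction ⊢
  generalize ∫ x in -(π / 2)..π / 2, cos x ^ (2 * γ - 2) = C at hreduction ⊢
  have hCA : C - A = A / (2 * γ - 1) := by
    rw [eq_div_iff (by linarith)]
    linear_combination -hreduction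
  rw [hCA]
  field_simp

lemma integral_sq_deriv_const_mul (μ : Measure ℝ) (c : ℝ) (f : ℝ → ℝ) :
    ∫ k, deriv (fun k => c * f k) k ^ 2 ∂μ = c ^ 2 * ∫ k, deriv f k ^ 2 ∂μ := by
  simp only [deriv_const_mul_field', mul_pow, MeasureTheory.integral_const_mul]

/-- Position second moment (variance) of the optimal states: for
`ψ(k) = cos(√β k)^γ` with `γ > 1/2` on `I = (−π/(2√β), π/(2√β))`,
`∫_I ψ'² = (β γ²/(2γ−1)) ∫_I ψ²`; hence the normalized state
`ψ_γ = κ(γ)^{−1/2} ψ` has `∫_I ψ_γ'² = β γ²/(2γ−1)`. -/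
theorem position_variance_optimal_states
    (β γ : ℝ) (hβ : 0 < β) (hγ : 1 / 2 < γ)
    (I : Set ℝ)
    (hI : I = Set.Ioo (-(Real.pi / (2 * Real.sqrt β))) (Real.pi / (2 * Real.sqrt β)))
    (ψ : ℝ → ℝ)
    (hψ : ∀ k : ℝ, ψ k = Real.cos (Real.sqrt β * k) ^ γ)
    (κ : ℝ) (hκ : κ = ∫ k in I, ψ k ^ 2)
    (ψn : ℝ → ℝ)
    (hψn : ∀ k : ℝ, ψn k = κ ^ (-(1 / 2) : ℝ) * ψ k) :
    (∫ k in I, (deriv ψ k) ^ 2)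
        = (β * γ ^ 2 / (2 * γ - 1)) * ∫ k in I, ψ k ^ 2 ∧
    (∫ k in I, (deriv ψn k) ^ 2) = β * γ ^ 2 / (2 * γ - 1) := by
  have hs : 0 < √β := sqrt_pos.mpr hβ
  obtain rfl : ψ = fun k => cos (√β * k) ^ γ := funext hψ
  subst hI
  have hvariance := integral_sq_deriv_cos_mul_rpow_eq_mul_integral_sq hs hγ
  rw [sq_sqrt hβ.le] at hvariance
  have hκ_pos : 0 < κ := by
    rw [hκ, integral_cos_mul_rpow_sq hs]
    exact mul_pos (inv_pos.mpr hs) (integral_cos_rpow_pos (by linarith))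
  refine ⟨hvariance, ?_⟩
  rw [funext hψn, integral_sq_deriv_const_mul, hvariance, ← hκ, ← rpow_mul_natCast hκ_pos.le]
  norm_num [rpow_neg_one]
  field_simp
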